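/- arXiv:math/0106055 — 4 statements merged into one kernel-verified Lean document; each statement's English description precedes it below -/
import Mathlib

section
/- Let G be a finite group acting by ℤ-linear automorphisms on a free ℤ-module Λ of finite rank, and let V := ℚ ⊗_ℤ Λ. Let e be a central idempotent of ℚ[G] and suppose e = p_1 + … + p_n where p_1, …, p_n are pairwise orthogonal idempotents of ℚ[G] that are pairwise conjugate, i.e. for each j there is a unit u_j of the algebra e·ℚ[G] with p_j = u_j p_1 u_j⁻¹. Then the subgroups Λ ∩ p_j V all have the same rank, and the (direct) sum Σ_j (Λ ∩ p_j V) has finite index in Λ ∩ eV. -/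
/-!
Everything reduces to linear algebra over `ℚ` once one knows that the ℤ-lattice `Λ ∩ W` of a
`ℚ`-subspace `W ⊆ V` spans `W`: its rank is then `dim W`, and every vector of `W` has a nonzero
multiple in it. Conjugate idempotents `p j = u p₁ v`, `p₁ = v (p j) u` act on `V` with images of
the same dimension, so the lattices `Λ ∩ p j V` have equal rank; orthogonality of the `p j` makes
the images `p j V` independent. Finally `eV = Σ p j V` is spanned by `Σ (Λ ∩ p j V)`, so
`Λ ∩ eV` modulo this sum is a finitely generated torsion group, hence finite.
-/

open scoped TensorProduct nonZeroDivisors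

/-- A `ℚ`-vector space is its own localization at `ℤ⁰`; this identifies the `ℚ`-span of a
`ℤ`-submodule with its localization `Submodule.localized'`. -/
instance isLocalizedModule_int_id {V : Type*} [AddCommGroup V] [Module ℚ V] :
    IsLocalizedModule ℤ⁰ (LinearMap.id : V →ₗ[ℤ] V) :=
  isLocalizedModule_id ℤ⁰ V ℚ

theorem IsLocalizedModule.span_range_eq_top {R S M N : Type*} [CommSemiring R] [CommSemiring S]
    [AddCommMonoid M] [AddCommMonoid N] [Module R M] [Module R N] [Algebra R S] [Module S N]
    [IsScalarTower R S N] (p : Submonoid R) [IsLocalization p S] (f : M →ₗ[R] N)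
    [IsLocalizedModule p f] : Submodule.span S (LinearMap.range f : Set N) = ⊤ := by
  have := Submodule.localized'_top S p f
  rwa [Submodule.localized'_eq_span, Submodule.top_coe, Set.image_univ,
    ← LinearMap.coe_range] at this

namespace Submodule

variable {V : Type*} [AddCommGroup V] [Module ℚ V]

theorem span_rat_eq_localized' (N : Submodule ℤ V) :
    span ℚ (N : Set V) = N.localized' ℚ ℤ⁰ LinearMap.id := by
  rw [localized'_eq_span, LinearMap.id_coe, Set.image_id]

theorem exists_smul_mem_of_mem_span_rat {N : Submodule ℤ V} {x : V}
    (hx : x ∈ span ℚ (N : Set V)) : ∃ s : ℤ⁰, s • x ∈ N := by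
  rw [span_rat_eq_localized', mem_localized'] at hx
  obtain ⟨m, hm, s, rfl⟩ := hx
  exact ⟨s, by rwa [IsLocalizedModule.mk'_cancel']⟩

theorem finrank_int_eq_finrank_span_rat (N : Submodule ℤ V) :
    Module.finrank ℤ N = Module.finrank ℚ (span ℚ (N : Set V)) := by
  rw [span_rat_eq_localized', IsLocalization.finrank_eq ℚ ℤ⁰ le_rfl,
    IsLocalizedModule.finrank_eq ℤ⁰ (N.toLocalized' ℚ ℤ⁰ LinearMap.id) le_rfl]

theorem span_rat_inf_restrictScalars {L : Submodule ℤ V} (hL : span ℚ (L : Set V) = ⊤)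
    (W : Submodule ℚ V) : span ℚ ((L ⊓ W.restrictScalars ℤ : Submodule ℤ V) : Set V) = W := by
  rw [span_rat_eq_localized', localized'_inf, ← span_rat_eq_localized',
    ← span_rat_eq_localized', hL, coe_restrictScalars, span_eq, top_inf_eq]

end Submodule

theorem Submodule.finiteIndex_addSubgroupOf_of_forall_smul_mem {M : Type*} [AddCommGroup M]
    {N K : Submodule ℤ M} [Module.Finite ℤ K] (h : ∀ x ∈ K, ∃ s : ℤ⁰, s • x ∈ N) :
    (N.toAddSubgroup.addSubgroupOf K.toAddSubgroup).FiniteIndex := by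
  have : Finite (K ⧸ N.comap K.subtype) := by
    refine Module.finite_of_fg_torsion _ fun x => ?_
    obtain ⟨y, rfl⟩ := Submodule.mkQ_surjective _ x
    obtain ⟨s, hs⟩ := h y y.2
    refine ⟨s, ?_⟩
    rwa [Submonoid.smul_def, ← map_smul, Submodule.mkQ_apply, Submodule.Quotient.mk_eq_zero]
  exact @AddSubgroup.finiteIndex_of_finite_quotient _ _ _ this

theorem iSupIndep.restrictScalars {R S M ι : Type*} [Semiring R] [Semiring S] [AddCommMonoid M]
    [Module R M] [Module S M] [SMul S R] [IsScalarTower S R M] {t : ι → Submodule R M}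
    (h : iSupIndep t) : iSupIndep fun i => (t i).restrictScalars S := fun i => by
  simpa only [← Submodule.restrictScalars_iSup, Submodule.disjoint_restrictScalars_iff] using h i

theorem OrthogonalIdempotents.iSupIndep_range {R M ι : Type*} [Semiring R] [AddCommGroup M]
    [Module R M] {f : ι → Module.End R M} (hf : OrthogonalIdempotents f) :
    iSupIndep fun i => LinearMap.range (f i) := by
  refine fun i => Submodule.disjoint_def.mpr fun x hxi hx => ?_
  have hker : (⨆ j, ⨆ _ : j ≠ i, LinearMap.range (f j)) ≤ LinearMap.ker (f i) :=
    iSup₂_le fun j hj => by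
      rintro _ ⟨y, rfl⟩
      rw [LinearMap.mem_ker, ← Module.End.mul_apply, hf.ortho hj.symm, LinearMap.zero_apply]
  obtain ⟨y, rfl⟩ := hxi
  have hfx := hker hx
  rwa [LinearMap.mem_ker, ← Module.End.mul_apply, (hf.idem i).eq] at hfx

theorem LinearMap.rank_mul_mul_le {K V : Type*} [DivisionRing K] [AddCommGroup V] [Module K V]
    (a b c : Module.End K V) : (a * b * c).rank ≤ b.rank :=
  (rank_comp_le_left c (a * b)).trans (rank_comp_le_right b a)

theorem LinearMap.range_sum_le {R M M₂ ι : Type*} [Semiring R] [AddCommMonoid M]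
    [AddCommMonoid M₂] [Module R M] [Module R M₂] [Fintype ι] (f : ι → M →ₗ[R] M₂) :
    range (∑ i, f i) ≤ ⨆ i, range (f i) := by
  rintro _ ⟨y, rfl⟩
  rw [LinearMap.sum_apply]
  exact Submodule.sum_mem _ fun i _ => Submodule.mem_iSup_of_mem i (mem_range_self _ _)

theorem stmt7_general (G : Type) [Group G]
    (Λ : Type) [AddCommGroup Λ] [Module ℤ Λ] [Module.Finite ℤ Λ]
    (e : MonoidAlgebra ℚ G)
    (hcent : e ∈ Subalgebra.center ℚ (MonoidAlgebra ℚ G))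
    (n : ℕ) (hn : 0 < n) (p : Fin n → MonoidAlgebra ℚ G)
    (hidem : ∀ j, p j * p j = p j)
    (horth : ∀ j k, j ≠ k → p j * p k = 0)
    (hsum : ∑ j, p j = e)
    -- the `p j` are pairwise conjugate by units of the algebra `e·ℚ[G]` (whose unit is `e`):
    (hconj : ∀ j, ∃ u v : MonoidAlgebra ℚ G,
      e * u = u ∧ e * v = v ∧ u * v = e ∧ v * u = e ∧ p j = u * p ⟨0, hn⟩ * v)
    (ρQ : Representation ℚ G (ℚ ⊗[ℤ] Λ))
    (ΛZ : Submodule ℤ (ℚ ⊗[ℤ] Λ))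
    (hΛZ : ΛZ = LinearMap.range (TensorProduct.mk ℤ ℚ Λ 1))
    (Λp : Fin n → Submodule ℤ (ℚ ⊗[ℤ] Λ))
    (hΛp : ∀ j, Λp j =
      ΛZ ⊓ (LinearMap.range (Representation.asAlgebraHom ρQ (p j))).restrictScalars ℤ)
    (Λe : Submodule ℤ (ℚ ⊗[ℤ] Λ))
    (hΛe : Λe =
      ΛZ ⊓ (LinearMap.range (Representation.asAlgebraHom ρQ e)).restrictScalars ℤ) :
    (∀ j k, Module.finrank ℤ (Λp j) = Module.finrank ℤ (Λp k)) ∧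
    iSupIndep Λp ∧
    ((⨆ j, Λp j).toAddSubgroup.addSubgroupOf Λe.toAddSubgroup).FiniteIndex := by
  set π := Representation.asAlgebraHom ρQ
  set p₀ := p ⟨0, hn⟩
  have hp : OrthogonalIdempotents p := ⟨hidem, fun j k => horth j k⟩
  have hΛZ_span : Submodule.span ℚ (ΛZ : Set (ℚ ⊗[ℤ] Λ)) = ⊤ :=
    hΛZ ▸ IsLocalizedModule.span_range_eq_top ℤ⁰ _
  have hspan : ∀ j, Submodule.span ℚ (Λp j : Set (ℚ ⊗[ℤ] Λ)) = LinearMap.range (π (p j)) :=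
    fun j => hΛp j ▸ Submodule.span_rat_inf_restrictScalars hΛZ_span _
  have hp₀e : p₀ * e = p₀ := hsum ▸ hp.mul_sum_of_mem (Finset.mem_univ _)
  have hrank : ∀ j, (π (p j)).rank = (π p₀).rank := by
    intro j
    obtain ⟨u, v, -, -, -, hvu, hpj⟩ := hconj j
    have hp₀ : p₀ = v * p j * u :=
      calc p₀ = e * p₀ * e := by rw [← Subalgebra.mem_center_iff.mp hcent p₀, hp₀e, hp₀e]
        _ = v * (u * p₀ * v) * u := by rw [← hvu]; noncomm_ring
        _ = v * p j * u := by rw [hpj]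
    refine le_antisymm ?_ ?_
    · rw [hpj, map_mul, map_mul]
      exact LinearMap.rank_mul_mul_le _ _ _
    · conv_lhs => rw [hp₀, map_mul, map_mul]
      exact LinearMap.rank_mul_mul_le _ _ _
  refine ⟨fun j k => ?_, ?_, ?_⟩
  · rw [Submodule.finrank_int_eq_finrank_span_rat, Submodule.finrank_int_eq_finrank_span_rat,
      hspan, hspan]
    exact congrArg Cardinal.toNat ((hrank j).trans (hrank k).symm)
  · have hπp : OrthogonalIdempotents fun j => π (p j) := hp.map π.toRingHom
    exact hπp.iSupIndep_range.restrictScalars.mono fun j => (hΛp j).trans_le inf_le_right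
  · have hΛe_span : Λe ≤ (Submodule.span ℚ ((⨆ j, Λp j : Submodule ℤ _) :
        Set (ℚ ⊗[ℤ] Λ))).restrictScalars ℤ := by
      rw [hΛe, ← hsum, map_sum]
      refine inf_le_right.trans (Submodule.restrictScalars_mono ℤ ?_)
      refine (LinearMap.range_sum_le _).trans (iSup_le fun j => ?_)
      exact hspan j ▸ Submodule.span_mono (le_iSup Λp j)
    have : IsNoetherian ℤ ΛZ := hΛZ ▸ isNoetherian_of_isNoetherianRing_of_finite _ _
    have : IsNoetherian ℤ Λe := isNoetherian_of_le (hΛe.trans_le inf_le_left)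
    exact Submodule.finiteIndex_addSubgroupOf_of_forall_smul_mem fun x hx =>
      Submodule.exists_smul_mem_of_mem_span_rat (hΛe_span hx)

/-- With `G` acting `ℤ`-linearly on a free `ℤ`-module `Λ` of finite rank and
`V = ℚ ⊗_ℤ Λ` (with `Λ` embedded as `ΛZ` via `x ↦ 1 ⊗ x`), let `e` be a central idempotent
of `ℚ[G]` written as `e = p 1 + … + p n` with the `p j` pairwise orthogonal idempotents
which are pairwise conjugate by units of the algebra `e·ℚ[G]`.  Then the subgroups
`Λ ∩ (p j)·V` all have the same rank, and their (direct) sum has finite index in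
`Λ ∩ e·V`. -/
theorem stmt7 (G : Type) [Group G] [Fintype G]
    (Λ : Type) [AddCommGroup Λ] [Module ℤ Λ] [Module.Free ℤ Λ] [Module.Finite ℤ Λ]
    (ρ : Representation ℤ G Λ)
    (e : MonoidAlgebra ℚ G)
    (hcent : e ∈ Subalgebra.center ℚ (MonoidAlgebra ℚ G))
    (hee : e * e = e)
    (n : ℕ) (hn : 0 < n) (p : Fin n → MonoidAlgebra ℚ G)
    (hidem : ∀ j, p j * p j = p j)
    (horth : ∀ j k, j ≠ k → p j * p k = 0)
    (hsum : ∑ j, p j = e)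
    -- the `p j` are pairwise conjugate by units of the algebra `e·ℚ[G]` (whose unit is `e`):
    (hconj : ∀ j, ∃ u v : MonoidAlgebra ℚ G,
      e * u = u ∧ e * v = v ∧ u * v = e ∧ v * u = e ∧ p j = u * p ⟨0, hn⟩ * v)
    (ρQ : Representation ℚ G (ℚ ⊗[ℤ] Λ))
    (hρQ : ∀ g : G, ρQ g = LinearMap.baseChange ℚ (ρ g))
    (ΛZ : Submodule ℤ (ℚ ⊗[ℤ] Λ))
    (hΛZ : ΛZ = LinearMap.range (TensorProduct.mk ℤ ℚ Λ 1))
    (Λp : Fin n → Submodule ℤ (ℚ ⊗[ℤ] Λ))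
    (hΛp : ∀ j, Λp j =
      ΛZ ⊓ (LinearMap.range (Representation.asAlgebraHom ρQ (p j))).restrictScalars ℤ)
    (Λe : Submodule ℤ (ℚ ⊗[ℤ] Λ))
    (hΛe : Λe =
      ΛZ ⊓ (LinearMap.range (Representation.asAlgebraHom ρQ e)).restrictScalars ℤ) :
    (∀ j k, Module.finrank ℤ (Λp j) = Module.finrank ℤ (Λp k)) ∧
    iSupIndep Λp ∧
    ((⨆ j, Λp j).toAddSubgroup.addSubgroupOf Λe.toAddSubgroup).FiniteIndex :=
  stmt7_general G Λ e hcent n hn p hidem horth hsum hconj ρQ ΛZ hΛZ Λp hΛp Λe hΛe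
end

section
/- Let G be a finite group and (W, ρ) a finite-dimensional ℚ-representation of G with End_{ℚ[G]}(W) = ℚ·id (i.e. W is absolutely irreducible). Let B be a G-invariant positive-definite symmetric bilinear form on W and let w_1, …, w_n be a B-orthogonal basis of W, where n = dim_ℚ W. For each i define p_{w_i} := (n / (|G| · B(w_i, w_i))) · Σ_{g ∈ G} B(w_i, g·w_i) · g ∈ ℚ[G]. Then p_{w_i}² = p_{w_i} for all i, p_{w_i} · p_{w_j} = 0 for i ≠ j, the sum p_{w_1} + … + p_{w_n} is central in ℚ[G], ρ(p_{w_1} + … + p_{w_n}) = id_W, and p_{w_1} + … + p_{w_n} acts as zero on every irreducible ℚ-representation of G not isomorphic to W. -/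
/-!
Averaging an endomorphism `f` of `W` over `G` gives an equivariant endomorphism, hence the
scalar `|G| · tr f / n`. For the rank-one maps `x ↦ B(v, x) • u` this is the Schur orthogonality
relation `∑_g B(u, g v) B(v', g u') = (|G| / n) B(v, u') B(v', u)`: the element
`∑_g B(u, g v) g` acts on `W` as `x ↦ (|G| / n) B(v, x) • u`, and these elements multiply like
matrix units. Idempotence, orthogonality and `ρ(∑ p_i) = id` follow. The sum `∑ p_i` equals
`(n / |G|) ∑_g χ_W(g) g`, which is central because characters are class functions. On another
representation `W'`, `∑_g B(u, g v) g` sends `x'` to the value at `u` of an averaged, hence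
equivariant, map `W → W'`, which vanishes by Schur's lemma: `W` is irreducible because the
`B`-orthogonal projection onto an invariant subspace is equivariant, hence a scalar.
-/

open CategoryTheory

lemma MonoidAlgebra.mem_center_of_coeff_mul_comm {k G : Type*} [CommSemiring k] [Group G]
    {z : MonoidAlgebra k G} (hz : ∀ g h, z.coeff (g * h) = z.coeff (h * g)) :
    z ∈ Subalgebra.center k (MonoidAlgebra k G) := by
  rw [Subalgebra.mem_center_iff]
  intro x
  induction x using MonoidAlgebra.induction_on with
  | of g =>
    ext h
    rw [MonoidAlgebra.of_apply, MonoidAlgebra.coeff_single_mul_apply,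
      MonoidAlgebra.coeff_mul_single_apply, one_mul, mul_one, hz]
  | add x y hx hy => rw [add_mul, mul_add, hx, hy]
  | smul r x hx => rw [smul_mul_assoc, hx, mul_smul_comm]

namespace LinearMap.BilinForm.iIsOrtho

variable {k V ι : Type*} [Field k] [AddCommGroup V] [Module k V] [Fintype ι]
  {B : LinearMap.BilinForm k V} {w : Module.Basis ι k V}

lemma apply_basis_eq_repr_mul (hw : B.iIsOrtho w) (i : ι) (x : V) :
    B (w i) x = w.repr x i * B (w i) (w i) := by
  conv_lhs => rw [← w.sum_repr x]
  simp only [map_sum, map_smul, smul_eq_mul]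
  refine Finset.sum_eq_single i (fun j _ hji => ?_) (by simp)
  rw [LinearMap.BilinForm.iIsOrtho_def.1 hw i j hji.symm, mul_zero]

lemma trace_eq_sum (hw : B.iIsOrtho w) (hww : ∀ i, B (w i) (w i) ≠ 0) (f : V →ₗ[k] V) :
    LinearMap.trace k V f = ∑ i, B (w i) (f (w i)) / B (w i) (w i) := by
  classical
  rw [LinearMap.trace_eq_matrix_trace k w f, Matrix.trace]
  refine Finset.sum_congr rfl fun i _ => ?_
  rw [Matrix.diag_apply, LinearMap.toMatrix_apply, hw.apply_basis_eq_repr_mul,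
    mul_div_cancel_right₀ _ (hww i)]

end LinearMap.BilinForm.iIsOrtho

namespace Representation

variable {k G V V' : Type*} [Field k] [Group G]
  [AddCommGroup V] [Module k V] [AddCommGroup V'] [Module k V']

def HasScalarCommutant (ρ : Representation k G V) : Prop :=
  ∀ f : V →ₗ[k] V, (∀ g, f ∘ₗ ρ g = ρ g ∘ₗ f) → ∃ c : k, f = c • LinearMap.id

section Form

variable {ρ : Representation k G V} {B : LinearMap.BilinForm k V}

lemma form_apply_inv (hinv : ∀ (g : G) (v w : V), B (ρ g v) (ρ g w) = B v w) (g : G) (v w : V) :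
    B v (ρ g⁻¹ w) = B (ρ g v) w := by
  rw [← hinv g v, self_inv_apply]

lemma eq_bot_or_eq_top_of_forall_mem_invtSubmodule [FiniteDimensional k V]
    (hρ : HasScalarCommutant ρ) (hsymm : ∀ v w : V, B v w = B w v)
    (hanis : ∀ v, B v v = 0 → v = 0) (hinv : ∀ (g : G) (v w : V), B (ρ g v) (ρ g w) = B v w)
    {K : Submodule k V} (hK : ∀ g, K ∈ Module.End.invtSubmodule (ρ g)) : K = ⊥ ∨ K = ⊤ := by
  have hcompl : IsCompl K (B.orthogonal K) :=
    LinearMap.BilinForm.isCompl_orthogonal_of_restrict_nondegenerate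
      (fun x y h => by rw [hsymm]; exact h)
      ⟨fun m hm => Subtype.ext (hanis _ (hm m)), fun m hm => Subtype.ext (hanis _ (hm m))⟩
  have hperp : ∀ g, B.orthogonal K ∈ Module.End.invtSubmodule (ρ g) := fun g v hv =>
    LinearMap.BilinForm.mem_orthogonal_iff.2 fun u hu => by
      change B u (ρ g v) = 0
      rw [← self_inv_apply ρ g u, hinv]
      exact hv _ (hK g⁻¹ hu)
  set P := K.projection (B.orthogonal K) hcompl
  have hP : ∀ g, P ∘ₗ ρ g = ρ g ∘ₗ P := fun g =>
    ((LinearMap.IsIdempotentElem.commute_iff (Submodule.isIdempotentElem_projection hcompl)).2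
      ⟨by rw [Submodule.range_projection]; exact hK g,
        by rw [Submodule.ker_projection]; exact hperp g⟩).eq
  obtain ⟨c, hc⟩ := hρ P hP
  rw [← Submodule.range_projection hcompl]
  change LinearMap.range P = ⊥ ∨ LinearMap.range P = ⊤
  rcases eq_or_ne c 0 with rfl | hc0
  · left
    rw [hc, zero_smul, LinearMap.range_zero]
  · right
    exact LinearMap.range_eq_top.2 fun x => ⟨c⁻¹ • x, by simp [hc, smul_smul, hc0]⟩

lemma isIrreducible_of_hasScalarCommutant [FiniteDimensional k V] [Nontrivial V]
    (hρ : HasScalarCommutant ρ) (hsymm : ∀ v w : V, B v w = B w v)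
    (hanis : ∀ v, B v v = 0 → v = 0) (hinv : ∀ (g : G) (v w : V), B (ρ g v) (ρ g w) = B v w) :
    IsIrreducible ρ where
  exists_pair_ne := ⟨⊥, ⊤, fun h => bot_ne_top (congrArg Subrepresentation.toSubmodule h)⟩
  eq_bot_or_eq_top K :=
    (eq_bot_or_eq_top_of_forall_mem_invtSubmodule hρ hsymm hanis hinv (K := K.toSubmodule)
      fun g _ hv => K.apply_mem_toSubmodule g hv).imp Subrepresentation.ext Subrepresentation.ext

end Form

theorem _root_.FDRep.linearMap_eq_zero_of_not_iso {W W' : FDRep k G} [IsIrreducible W.ρ]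
    [Simple W'] (hWW' : ¬ Nonempty (W ≅ W')) (T : W →ₗ[k] W')
    (hT : ∀ g, T ∘ₗ W.ρ g = W'.ρ g ∘ₗ T) : T = 0 := by
  by_contra hT0
  rcases IsIrreducible.injective_or_eq_zero (⟨T, hT⟩ : IntertwiningMap W.ρ W'.ρ) with hinj | h0
  · let φ : W ⟶ W' := ⟨FGModuleCat.ofHom T, fun g => by ext x; exact LinearMap.congr_fun (hT g) x⟩
    have : Mono φ := ConcreteCategory.mono_of_injective φ hinj
    have hφ : φ ≠ 0 := fun h => hT0 (congrArg (fun f : W ⟶ W' => f.hom.hom.hom) h)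
    have := isIso_of_mono_of_nonzero hφ
    exact hWW' ⟨asIso φ⟩
  · exact hT0 (congrArg IntertwiningMap.toLinearMap h0)

variable [Fintype G]

noncomputable def conjSum (ρ : Representation k G V) (σ : Representation k G V')
    (f : V →ₗ[k] V') : V →ₗ[k] V' :=
  ∑ g : G, σ g ∘ₗ f ∘ₗ ρ g⁻¹

lemma conjSum_comp (ρ : Representation k G V) (σ : Representation k G V') (f : V →ₗ[k] V')
    (h : G) : conjSum ρ σ f ∘ₗ ρ h = σ h ∘ₗ conjSum ρ σ f := by
  ext x
  simp only [conjSum, LinearMap.comp_apply, LinearMap.sum_apply, map_sum]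
  refine (Fintype.sum_equiv (Equiv.mulLeft h) _ _ fun g => ?_).symm
  simp [map_mul, Module.End.mul_apply]

lemma trace_conjSum [FiniteDimensional k V] (ρ : Representation k G V) (f : V →ₗ[k] V) :
    LinearMap.trace k V (conjSum ρ ρ f) = Fintype.card G • LinearMap.trace k V f := by
  have hconj : ∀ g : G, LinearMap.trace k V (ρ g ∘ₗ f ∘ₗ ρ g⁻¹) = LinearMap.trace k V f := by
    intro g
    rw [LinearMap.trace_comp_comm', LinearMap.comp_assoc, ← Module.End.mul_eq_comp (ρ g⁻¹),
      ← map_mul, inv_mul_cancel, map_one, Module.End.one_eq_id, LinearMap.comp_id]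
  simp only [conjSum, map_sum, hconj, Finset.sum_const, Finset.card_univ]

lemma conjSum_eq_smul_id [FiniteDimensional k V] {ρ : Representation k G V}
    (hρ : HasScalarCommutant ρ) (hn : (Module.finrank k V : k) ≠ 0) (f : V →ₗ[k] V) :
    conjSum ρ ρ f =
      (Fintype.card G * LinearMap.trace k V f / Module.finrank k V) • LinearMap.id := by
  obtain ⟨c, hc⟩ := hρ _ (conjSum_comp ρ ρ f)
  have htrace := trace_conjSum ρ f
  rw [hc, map_smul, LinearMap.trace_id, smul_eq_mul, nsmul_eq_mul] at htrace
  rw [hc, ← htrace, mul_div_cancel_right₀ _ hn]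

section Form

variable {ρ : Representation k G V} {B : LinearMap.BilinForm k V}

variable (ρ B) in
noncomputable def matrixCoeff (u v : V) : MonoidAlgebra k G :=
  ∑ g : G, MonoidAlgebra.single g (B u (ρ g v))

lemma coeff_matrixCoeff (u v : V) (g : G) : (matrixCoeff ρ B u v).coeff g = B u (ρ g v) := by
  classical
  simp [matrixCoeff, MonoidAlgebra.coeff_sum, MonoidAlgebra.coeff_single, Finsupp.single_apply]

lemma asAlgebraHom_matrixCoeff_apply (hsymm : ∀ v w : V, B v w = B w v)
    (hinv : ∀ (g : G) (v w : V), B (ρ g v) (ρ g w) = B v w) (σ : Representation k G V')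
    (u v : V) (x : V') :
    σ.asAlgebraHom (matrixCoeff ρ B u v) x = conjSum ρ σ ((B v).smulRight x) u := by
  simp only [matrixCoeff, conjSum, map_sum, LinearMap.sum_apply, asAlgebraHom_single,
    LinearMap.smul_apply, LinearMap.comp_apply, LinearMap.smulRight_apply, map_smul,
    form_apply_inv hinv, hsymm u]

lemma asAlgebraHom_matrixCoeff_apply_self [FiniteDimensional k V] (hρ : HasScalarCommutant ρ)
    (hn : (Module.finrank k V : k) ≠ 0) (hsymm : ∀ v w : V, B v w = B w v)
    (hinv : ∀ (g : G) (v w : V), B (ρ g v) (ρ g w) = B v w) (u v x : V) :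
    ρ.asAlgebraHom (matrixCoeff ρ B u v) x =
      (Fintype.card G / Module.finrank k V * B v x) • u := by
  rw [asAlgebraHom_matrixCoeff_apply hsymm hinv, conjSum_eq_smul_id hρ hn,
    LinearMap.trace_smulRight, LinearMap.smul_apply, LinearMap.id_apply]
  congr 1
  ring

theorem sum_form_mul_form [FiniteDimensional k V] (hρ : HasScalarCommutant ρ)
    (hn : (Module.finrank k V : k) ≠ 0) (hsymm : ∀ v w : V, B v w = B w v)
    (hinv : ∀ (g : G) (v w : V), B (ρ g v) (ρ g w) = B v w) (u v u' v' : V) :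
    ∑ g : G, B u (ρ g v) * B v' (ρ g u') =
      Fintype.card G / Module.finrank k V * (B v u' * B v' u) := by
  have := congrArg (B v') (asAlgebraHom_matrixCoeff_apply_self hρ hn hsymm hinv u v u')
  simp only [matrixCoeff, map_sum, LinearMap.sum_apply, asAlgebraHom_single, LinearMap.smul_apply,
    map_smul, smul_eq_mul] at this
  rw [this]
  ring

lemma matrixCoeff_mul_matrixCoeff [FiniteDimensional k V] (hρ : HasScalarCommutant ρ)
    (hn : (Module.finrank k V : k) ≠ 0) (hsymm : ∀ v w : V, B v w = B w v)
    (hinv : ∀ (g : G) (v w : V), B (ρ g v) (ρ g w) = B v w) (u v u' v' : V) :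
    matrixCoeff ρ B u v * matrixCoeff ρ B u' v' =
      (Fintype.card G / Module.finrank k V * B v u') • matrixCoeff ρ B u v' := by
  ext g
  rw [MonoidAlgebra.coeff_mul_apply_left, Finsupp.sum_fintype _ _ (by simp),
    MonoidAlgebra.coeff_smul_apply, coeff_matrixCoeff, smul_eq_mul]
  simp only [coeff_matrixCoeff, map_mul, Module.End.mul_apply, form_apply_inv hinv,
    hsymm (ρ _ u')]
  rw [sum_form_mul_form hρ hn hsymm hinv, hsymm (ρ g v')]
  ring

variable (ρ B) in
noncomputable def formIdempotent (u : V) : MonoidAlgebra k G :=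
  (Module.finrank k V / (Fintype.card G * B u u)) • matrixCoeff ρ B u u

variable {ι : Type*} [Fintype ι] {w : Module.Basis ι k V}

lemma coeff_sum_formIdempotent (hw : B.iIsOrtho w) (hww : ∀ i, B (w i) (w i) ≠ 0) (g : G) :
    (∑ i, formIdempotent ρ B (w i)).coeff g =
      Module.finrank k V / Fintype.card G * ρ.character g := by
  rw [character, hw.trace_eq_sum hww, Finset.mul_sum, MonoidAlgebra.coeff_sum,
    Finset.sum_apply']
  refine Finset.sum_congr rfl fun i _ => ?_
  rw [formIdempotent, MonoidAlgebra.coeff_smul_apply, coeff_matrixCoeff, smul_eq_mul]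
  field_simp

lemma sum_formIdempotent_mem_center (hw : B.iIsOrtho w) (hww : ∀ i, B (w i) (w i) ≠ 0) :
    ∑ i, formIdempotent ρ B (w i) ∈ Subalgebra.center k (MonoidAlgebra k G) :=
  MonoidAlgebra.mem_center_of_coeff_mul_comm fun g h => by
    rw [coeff_sum_formIdempotent hw hww, coeff_sum_formIdempotent hw hww, char_mul_comm]

variable [CharZero k] [FiniteDimensional k V] [Nontrivial V]

lemma formIdempotent_mul_eq_zero (hρ : HasScalarCommutant ρ)
    (hsymm : ∀ v w : V, B v w = B w v) (hinv : ∀ (g : G) (v w : V), B (ρ g v) (ρ g w) = B v w)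
    {u v : V} (huv : B u v = 0) : formIdempotent ρ B u * formIdempotent ρ B v = 0 := by
  have hn : (Module.finrank k V : k) ≠ 0 := Nat.cast_ne_zero.2 Module.finrank_pos.ne'
  rw [formIdempotent, formIdempotent, smul_mul_smul_comm,
    matrixCoeff_mul_matrixCoeff hρ hn hsymm hinv, huv, mul_zero, zero_smul, smul_zero]

lemma formIdempotent_mul_self (hρ : HasScalarCommutant ρ)
    (hsymm : ∀ v w : V, B v w = B w v) (hinv : ∀ (g : G) (v w : V), B (ρ g v) (ρ g w) = B v w)
    {u : V} (hu : B u u ≠ 0) :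
    formIdempotent ρ B u * formIdempotent ρ B u = formIdempotent ρ B u := by
  have hn : (Module.finrank k V : k) ≠ 0 := Nat.cast_ne_zero.2 Module.finrank_pos.ne'
  have hG : (Fintype.card G : k) ≠ 0 := Nat.cast_ne_zero.2 Fintype.card_ne_zero
  rw [formIdempotent, smul_mul_smul_comm, matrixCoeff_mul_matrixCoeff hρ hn hsymm hinv, smul_smul]
  congr 1
  field_simp

lemma asAlgebraHom_formIdempotent_apply (hρ : HasScalarCommutant ρ)
    (hsymm : ∀ v w : V, B v w = B w v) (hinv : ∀ (g : G) (v w : V), B (ρ g v) (ρ g w) = B v w)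
    (u x : V) : ρ.asAlgebraHom (formIdempotent ρ B u) x = (B u x / B u u) • u := by
  have hn : (Module.finrank k V : k) ≠ 0 := Nat.cast_ne_zero.2 Module.finrank_pos.ne'
  have hG : (Fintype.card G : k) ≠ 0 := Nat.cast_ne_zero.2 Fintype.card_ne_zero
  rw [formIdempotent, map_smul, LinearMap.smul_apply,
    asAlgebraHom_matrixCoeff_apply_self hρ hn hsymm hinv, smul_smul]
  congr 1
  field_simp

lemma asAlgebraHom_sum_formIdempotent (hρ : HasScalarCommutant ρ)
    (hsymm : ∀ v w : V, B v w = B w v) (hinv : ∀ (g : G) (v w : V), B (ρ g v) (ρ g w) = B v w)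
    (hw : B.iIsOrtho w) (hww : ∀ i, B (w i) (w i) ≠ 0) :
    ρ.asAlgebraHom (∑ i, formIdempotent ρ B (w i)) = LinearMap.id := by
  ext x
  rw [map_sum, LinearMap.sum_apply, LinearMap.id_apply]
  conv_rhs => rw [← w.sum_repr x]
  refine Finset.sum_congr rfl fun i _ => ?_
  rw [asAlgebraHom_formIdempotent_apply hρ hsymm hinv, hw.apply_basis_eq_repr_mul,
    mul_div_cancel_right₀ _ (hww i)]

end Form

lemma asAlgebraHom_formIdempotent_eq_zero {W W' : FDRep k G} [IsIrreducible W.ρ] [Simple W']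
    (hWW' : ¬ Nonempty (W ≅ W')) {B : LinearMap.BilinForm k W} (hsymm : ∀ v w : W, B v w = B w v)
    (hinv : ∀ (g : G) (v w : W), B (W.ρ g v) (W.ρ g w) = B v w) (u : W) :
    asAlgebraHom W'.ρ (formIdempotent W.ρ B u) = 0 := by
  ext x
  rw [formIdempotent, map_smul, LinearMap.smul_apply, asAlgebraHom_matrixCoeff_apply hsymm hinv,
    FDRep.linearMap_eq_zero_of_not_iso hWW' _ (conjSum_comp _ _ _)]
  simp

end Representation

/-- Let `(W, ρ)` be a finite-dimensional `ℚ`-representation of a finite group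
`G` whose `G`-equivariant endomorphisms are exactly the rational multiples of the identity
(absolute irreducibility).  Let `B` be a `G`-invariant positive-definite symmetric bilinear
form on `W` and `w 1, …, w n` a `B`-orthogonal basis, `n = dim_ℚ W`.  Define
`p i = (n / (|G| · B(wᵢ, wᵢ))) · ∑_g B(wᵢ, g·wᵢ) · g ∈ ℚ[G]`.  Then the `p i` are
pairwise orthogonal idempotents, their sum is central, `ρ` sends the sum to the identity of
`W`, and the sum acts as zero on every irreducible `ℚ`-representation not isomorphic
to `W`. -/
theorem stmt9 (G : Type) [Group G] [Fintype G]
    (W : FDRep ℚ G)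
    (hEnd : ∀ f : W →ₗ[ℚ] W, (∀ g : G, f ∘ₗ W.ρ g = W.ρ g ∘ₗ f) →
      ∃ c : ℚ, f = c • (LinearMap.id : W →ₗ[ℚ] W))
    (B : W →ₗ[ℚ] W →ₗ[ℚ] ℚ)
    (hsymm : ∀ v w : W, B v w = B w v)
    (hposdef : ∀ v : W, v ≠ 0 → 0 < B v v)
    (hinv : ∀ (g : G) (v w : W), B (W.ρ g v) (W.ρ g w) = B v w)
    (n : ℕ) (hn : n = Module.finrank ℚ W)
    (w : Module.Basis (Fin n) ℚ W)
    (horthb : ∀ i j, i ≠ j → B (w i) (w j) = 0)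
    (p : Fin n → MonoidAlgebra ℚ G)
    (hp : ∀ i, p i = ((n : ℚ) / ((Fintype.card G : ℚ) * B (w i) (w i))) •
      ∑ g : G, MonoidAlgebra.single g (B (w i) (W.ρ g (w i)))) :
    (∀ i, p i * p i = p i) ∧
    (∀ i j, i ≠ j → p i * p j = 0) ∧
    (∑ i, p i) ∈ Subalgebra.center ℚ (MonoidAlgebra ℚ G) ∧
    Representation.asAlgebraHom W.ρ (∑ i, p i) = LinearMap.id ∧
    ∀ W' : FDRep ℚ G, Simple W' → ¬ Nonempty (W ≅ W') →
      Representation.asAlgebraHom W'.ρ (∑ i, p i) = 0 := by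
  subst hn
  obtain rfl : p = fun i => Representation.formIdempotent W.ρ B (w i) := funext hp
  rcases subsingleton_or_nontrivial W with hW | hW
  · have : IsEmpty (Fin (Module.finrank ℚ W)) := by
      rw [Module.finrank_zero_of_subsingleton]; infer_instance
    simp
  have hanis : ∀ v : W, B v v = 0 → v = 0 := fun v hv => by_contra fun h => (hposdef v h).ne' hv
  have hw : LinearMap.BilinForm.iIsOrtho B w := LinearMap.BilinForm.iIsOrtho_def.2 horthb
  have hww : ∀ i, B (w i) (w i) ≠ 0 := fun i => (hposdef _ (w.ne_zero i)).ne'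
  have := Representation.isIrreducible_of_hasScalarCommutant hEnd hsymm hanis hinv
  refine ⟨fun i => Representation.formIdempotent_mul_self hEnd hsymm hinv (hww i),
    fun i j hij => Representation.formIdempotent_mul_eq_zero hEnd hsymm hinv (horthb i j hij),
    Representation.sum_formIdempotent_mem_center hw hww,
    Representation.asAlgebraHom_sum_formIdempotent hEnd hsymm hinv hw hww, fun W' _ hWW' => ?_⟩
  rw [map_sum]
  exact Finset.sum_eq_zero fun i _ =>
    Representation.asAlgebraHom_formIdempotent_eq_zero hWW' hsymm hinv (w i)
end

section
/- Let G be a finite group and (W, ρ) a finite-dimensional ℚ-representation of G with End_{ℚ[G]}(W) = ℚ·id. Let B be a G-invariant positive-definite symmetric bilinear form on W, w_1, …, w_n a B-orthogonal basis of W with n = dim_ℚ W, and p_{w_i} := (n / (|G| · B(w_i, w_i))) · Σ_{g ∈ G} B(w_i, g·w_i) · g ∈ ℚ[G]. Then ρ(p_{w_i}) is the B-orthogonal projection of W onto the line ℚ·w_i; that is, ρ(p_{w_i})(w_i) = w_i and ρ(p_{w_i})(w_j) = 0 for all j ≠ i. -/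
/-!
For any endomorphism `f`, the conjugation average `∑_g ρ(g) f ρ(g)⁻¹` is `G`-equivariant, hence a
scalar `c`; comparing traces gives `c · dim W = |G| · tr f`. Taking for `f` the rank-one map
`y ↦ B(u, y) v`, and using invariance and symmetry of `B`, yields the Schur orthogonality relation
`∑_g B(x, g u) · g v = (|G| B(u, v) / dim W) · x`. For `x = u = wᵢ`, `v = wⱼ` the right side is
`0` when `j ≠ i` by orthogonality, and for `j = i` the factor in `p wᵢ` cancels the scalar.
-/

open Module

namespace Representation

variable {k G V : Type*} [Field k] [Group G] [Fintype G] [AddCommGroup V] [Module k V]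
  (ρ : Representation k G V)

def sumOfConjugates (f : End k V) : End k V := ∑ g : G, ρ g * f * ρ g⁻¹

theorem sumOfConjugates_mul_comm (f : End k V) (h : G) :
    ρ.sumOfConjugates f * ρ h = ρ h * ρ.sumOfConjugates f := by
  simp only [sumOfConjugates, Finset.sum_mul, Finset.mul_sum]
  refine Fintype.sum_equiv (Equiv.mulLeft h⁻¹) _ _ fun g => ?_
  simp only [Equiv.coe_mulLeft, mul_inv_rev, inv_inv, map_mul, ← mul_assoc]
  rw [← map_mul ρ h h⁻¹, mul_inv_cancel, map_one, one_mul]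

theorem trace_sumOfConjugates (f : End k V) :
    LinearMap.trace k V (ρ.sumOfConjugates f) = Fintype.card G * LinearMap.trace k V f := by
  have hconj (g : G) : LinearMap.trace k V (ρ g * f * ρ g⁻¹) = LinearMap.trace k V f := by
    rw [LinearMap.trace_mul_cycle, ← map_mul, inv_mul_cancel, map_one, one_mul]
  simp [sumOfConjugates, hconj]

theorem sumOfConjugates_eq_smul_id [CharZero k] [FiniteDimensional k V]
    (hEnd : ∀ f : V →ₗ[k] V, (∀ g : G, f ∘ₗ ρ g = ρ g ∘ₗ f) → ∃ c : k, f = c • LinearMap.id)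
    (f : End k V) :
    ρ.sumOfConjugates f = (Fintype.card G * LinearMap.trace k V f / finrank k V) • 1 := by
  obtain ⟨c, hc⟩ := hEnd _ (ρ.sumOfConjugates_mul_comm f)
  rcases eq_or_ne (finrank k V) 0 with hV | hV
  · ext x
    simp [(finrank_zero_iff_forall_zero.mp hV) x]
  have htrace := ρ.trace_sumOfConjugates f
  rw [hc, map_smul, LinearMap.trace_id, smul_eq_mul] at htrace
  rw [hc, ← htrace, mul_div_cancel_right₀ _ (Nat.cast_ne_zero.mpr hV)]
  rfl

theorem sumOfConjugates_smulRight_apply (f : V →ₗ[k] k) (v x : V) :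
    ρ.sumOfConjugates (f.smulRight v) x = ∑ g : G, f (ρ g⁻¹ x) • ρ g v := by
  simp [sumOfConjugates, LinearMap.sum_apply]

theorem sum_smul_apply_eq_of_invariant [CharZero k] [FiniteDimensional k V]
    (hEnd : ∀ f : V →ₗ[k] V, (∀ g : G, f ∘ₗ ρ g = ρ g ∘ₗ f) → ∃ c : k, f = c • LinearMap.id)
    (B : V →ₗ[k] V →ₗ[k] k) (hsymm : ∀ v w, B v w = B w v)
    (hinv : ∀ (g : G) (v w : V), B (ρ g v) (ρ g w) = B v w) (u v x : V) :
    ∑ g : G, B x (ρ g u) • ρ g v = (Fintype.card G * B u v / finrank k V) • x := by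
  -- the left side is the conjugation average of `y ↦ B u y • v`, evaluated at `x`
  have hB (g : G) : B x (ρ g u) = B u (ρ g⁻¹ x) := by
    rw [hsymm, ← hinv g⁻¹, ← Module.End.mul_apply, ← map_mul, inv_mul_cancel, map_one]; rfl
  simp only [hB, ← sumOfConjugates_smulRight_apply, ρ.sumOfConjugates_eq_smul_id hEnd,
    LinearMap.trace_smulRight]
  rfl

theorem asAlgebraHom_sum_single_apply (a : G → k) (v : V) :
    ρ.asAlgebraHom (∑ g : G, MonoidAlgebra.single g (a g)) v = ∑ g : G, a g • ρ g v := by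
  simp [LinearMap.sum_apply, asAlgebraHom_single]

end Representation

open Representation in
/-- With `(W, ρ)` an absolutely irreducible `ℚ`-representation of a finite
group `G` (its `G`-equivariant endomorphisms are the rational multiples of the identity),
`B` a `G`-invariant positive-definite symmetric bilinear form, `w 1, …, w n` a
`B`-orthogonal basis of `W` and
`p i = (n / (|G| · B(wᵢ, wᵢ))) · ∑_g B(wᵢ, g·wᵢ) · g ∈ ℚ[G]`, the endomorphism
`ρ(p i)` is the `B`-orthogonal projection onto the line `ℚ·wᵢ`: it sends `wᵢ` to `wᵢ`
and `wⱼ` to `0` for `j ≠ i`. -/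
theorem stmt10 (G : Type) [Group G] [Fintype G]
    (W : FDRep ℚ G)
    (hEnd : ∀ f : W →ₗ[ℚ] W, (∀ g : G, f ∘ₗ W.ρ g = W.ρ g ∘ₗ f) →
      ∃ c : ℚ, f = c • (LinearMap.id : W →ₗ[ℚ] W))
    (B : W →ₗ[ℚ] W →ₗ[ℚ] ℚ)
    (hsymm : ∀ v w : W, B v w = B w v)
    (hposdef : ∀ v : W, v ≠ 0 → 0 < B v v)
    (hinv : ∀ (g : G) (v w : W), B (W.ρ g v) (W.ρ g w) = B v w)
    (n : ℕ) (hn : n = Module.finrank ℚ W)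
    (w : Module.Basis (Fin n) ℚ W)
    (horthb : ∀ i j, i ≠ j → B (w i) (w j) = 0)
    (p : Fin n → MonoidAlgebra ℚ G)
    (hp : ∀ i, p i = ((n : ℚ) / ((Fintype.card G : ℚ) * B (w i) (w i))) •
      ∑ g : G, MonoidAlgebra.single g (B (w i) (W.ρ g (w i)))) :
    ∀ i, Representation.asAlgebraHom W.ρ (p i) (w i) = w i ∧
      ∀ j, j ≠ i → Representation.asAlgebraHom W.ρ (p i) (w j) = 0 := by
  intro i
  have hn0 : (n : ℚ) ≠ 0 := Nat.cast_ne_zero.mpr i.pos.ne'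
  have hcard : (Fintype.card G : ℚ) ≠ 0 := Nat.cast_ne_zero.mpr Fintype.card_ne_zero
  have hBii : B (w i) (w i) ≠ 0 := (hposdef _ (w.ne_zero i)).ne'
  have hp_apply (j : Fin n) : asAlgebraHom W.ρ (p i) (w j) =
      (n / (Fintype.card G * B (w i) (w i)) * (Fintype.card G * B (w i) (w j) / n)) • w i := by
    rw [hp, map_smul, LinearMap.smul_apply, asAlgebraHom_sum_single_apply,
      sum_smul_apply_eq_of_invariant _ hEnd B hsymm hinv, ← hn, smul_smul]
  refine ⟨?_, fun j hj => ?_⟩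
  · rw [hp_apply]
    convert one_smul ℚ (w i) using 2
    field_simp
  · rw [hp_apply, horthb i j hj.symm, mul_zero, zero_div, mul_zero, zero_smul]
end

section
/- Let G be a finite group and W a finite-dimensional irreducible ℚ-representation of G. Then the extension of scalars W ⊗_ℚ ℝ is irreducible as an ℝ-representation of G if and only if the ℚ-vector space of G-invariant symmetric bilinear forms on W is 1-dimensional. -/
/-!
Over `ℝ`, a representation of a finite group has an invariant inner product, and invariant
symmetric forms `B` are the forms `B x y = ⟪T x, y⟫` with `T` a self-adjoint intertwiner. If the
representation is irreducible, an eigenspace of `T` is a nonzero subrepresentation, hence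
everything, so `B` is a multiple of the inner product; if it is not, the orthogonal projection
onto a proper subrepresentation gives an invariant form that is not. So `ℝ ⊗ W` is irreducible
iff its invariant symmetric forms form a line. Averaging the base changes of a basis of all
bilinear forms on `W` shows that this space is spanned by base changes of rational invariant
forms, so it is a line iff the rational one is.
-/

open scoped TensorProduct InnerProductSpace

open LinearMap (BilinForm)

theorem Submodule.finrank_eq_one_iff_of_mem {K M : Type*} [DivisionRing K] [AddCommGroup M]
    [Module K M] {S : Submodule K M} {x : M} (hx : x ∈ S) (hx0 : x ≠ 0) :
    Module.finrank K S = 1 ↔ ∀ y ∈ S, ∃ c : K, c • x = y := by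
  rw [finrank_eq_one_iff_of_nonzero' (⟨x, hx⟩ : S) (by simpa using hx0)]
  simp [Subtype.ext_iff]

theorem Submodule.exists_mem_ne_zero_of_finrank_eq_one {R M : Type*} [Semiring R] [Nontrivial R]
    [AddCommMonoid M] [Module R M] {S : Submodule R M} (h : Module.finrank R S = 1) :
    ∃ x ∈ S, x ≠ 0 :=
  (Submodule.ne_bot_iff S).1 fun hbot => by
    rw [hbot, finrank_bot] at h
    exact zero_ne_one h

namespace LinearMap.BilinForm

theorem exists_forall_apply_self_pos (V : Type*) [AddCommGroup V] [Module ℝ V]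
    [FiniteDimensional ℝ V] : ∃ B : BilinForm ℝ V, ∀ v ≠ 0, 0 < B v v := by
  let e := (Module.finBasis ℝ V).equivFun.trans (WithLp.linearEquiv 2 ℝ _).symm
  exact ⟨(innerₗ _).compl₁₂ e.toLinearMap e.toLinearMap, fun v hv =>
    real_inner_self_pos.2 (e.map_ne_zero_iff.2 hv)⟩

variable {K L W : Type*} [Field K] [Field L] [Algebra K L] [AddCommGroup W] [Module K W]

theorem baseChange_one_tmul_one_tmul (B : BilinForm K W) (v w : W) :
    B.baseChange L (1 ⊗ₜ v) (1 ⊗ₜ w) = algebraMap K L (B v w) := by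
  simp [Algebra.algebraMap_eq_smul_one]

theorem baseChange_smul (c : K) (B : BilinForm K W) :
    (c • B).baseChange L = algebraMap K L c • B.baseChange L := by
  ext v w
  simp [Algebra.smul_def]

theorem mem_span_range_baseChange [FiniteDimensional K W] (C : BilinForm L (L ⊗[K] W)) :
    C ∈ Submodule.span L (Set.range (BilinForm.baseChange L (M₂ := W) (R := K))) := by
  classical
  let b := Module.finBasis K W
  let f (p : Fin (Module.finrank K W) × Fin (Module.finrank K W)) : BilinForm K W :=
    (LinearMap.mul K K).compl₁₂ (b.coord p.1) (b.coord p.2)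
  have hC : C = ∑ p, C (1 ⊗ₜ b p.1) (1 ⊗ₜ b p.2) • (f p).baseChange L := by
    refine ext_basis (b.baseChange L) fun i j => ?_
    simp [f, Finsupp.single_apply, Fintype.sum_prod_type]
  rw [hC]
  exact Submodule.sum_mem _ fun p _ => Submodule.smul_mem _ _ (Submodule.subset_span ⟨f p, rfl⟩)

theorem exists_smul_eq_of_smul_baseChange_eq_baseChange {B₀ B : BilinForm K W} (hB₀ : B₀ ≠ 0)
    {a : L} (h : a • B₀.baseChange L = B.baseChange L) : ∃ c : K, c • B₀ = B := by
  obtain ⟨v, w, hvw⟩ : ∃ v w, B₀ v w ≠ 0 := by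
    by_contra! h0
    exact hB₀ (LinearMap.ext₂ h0)
  have hval : ∀ x y, a * algebraMap K L (B₀ x y) = algebraMap K L (B x y) := fun x y => by
    have := LinearMap.congr_fun₂ h (1 ⊗ₜ x) (1 ⊗ₜ y)
    rwa [smul_apply, smul_apply, baseChange_one_tmul_one_tmul,
      baseChange_one_tmul_one_tmul] at this
  have ha : a = algebraMap K L (B v w / B₀ v w) := by
    rw [map_div₀, ← hval, mul_div_cancel_right₀ _ ((map_ne_zero _).2 hvw)]
  refine ⟨B v w / B₀ v w, LinearMap.ext₂ fun x y => (algebraMap K L).injective ?_⟩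
  rw [smul_apply, smul_apply, smul_eq_mul, map_mul, ← ha, hval]

end LinearMap.BilinForm

namespace Representation

section Forms

variable {K V G : Type*} [Field K] [AddCommGroup V] [Module K V]

def invariantSymmForms [Monoid G] (σ : Representation K G V) :
    Submodule K (BilinForm K V) where
  carrier := {B | (∀ v w : V, B v w = B w v) ∧ ∀ (g : G) (v w : V), B (σ g v) (σ g w) = B v w}
  add_mem' := by
    rintro B B' ⟨hBs, hBi⟩ ⟨hB's, hB'i⟩
    exact ⟨fun v w => by simp [hBs v w, hB's v w], fun g v w => by simp [hBi, hB'i]⟩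
  zero_mem' := ⟨fun _ _ => rfl, fun _ _ _ => rfl⟩
  smul_mem' := by
    rintro c B ⟨hBs, hBi⟩
    exact ⟨fun v w => by simp [hBs v w], fun g v w => by simp [hBi]⟩

theorem finrank_invariantSymmForms_eq_one_iff_of_mem [Monoid G] {σ : Representation K G V}
    {B : BilinForm K V} (hB : B ∈ σ.invariantSymmForms) (hB0 : B ≠ 0) :
    Module.finrank K σ.invariantSymmForms = 1 ↔
      ∀ B' ∈ σ.invariantSymmForms, ∃ c : K, c • B = B' :=
  -- naming `M` avoids a slow unification of two `AddCommMonoid` instances on bilinear forms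
  Submodule.finrank_eq_one_iff_of_mem (M := BilinForm K V) hB hB0

variable [Group G]

theorem apply_map_left_eq_apply_map_inv_right {σ : Representation K G V}
    {B : BilinForm K V} (hB : B ∈ σ.invariantSymmForms) (g : G) (v w : V) :
    B (σ g v) w = B v (σ g⁻¹ w) := by
  conv_lhs => rw [← σ.self_inv_apply g w]
  exact hB.2 g v (σ g⁻¹ w)

variable [Fintype G]

/-- The normalisation `(2 * |G|)⁻¹` is only meaningful when `2 * |G|` is invertible in `K`. -/
noncomputable def symmAverage (σ : Representation K G V) :
    BilinForm K V →ₗ[K] BilinForm K V where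
  toFun B := (2 * Fintype.card G : K)⁻¹ •
    ∑ g : G, (B.compl₁₂ (σ g) (σ g) + (B.compl₁₂ (σ g) (σ g)).flip)
  map_add' B B' := by
    ext v w
    simp only [LinearMap.smul_apply, LinearMap.sum_apply, LinearMap.add_apply, smul_eq_mul,
      LinearMap.compl₁₂_apply, LinearMap.flip_apply, ← mul_add, ← Finset.sum_add_distrib]
    exact congrArg _ (Finset.sum_congr rfl fun _ _ => by ring)
  map_smul' c B := by
    ext v w
    simp only [LinearMap.smul_apply, LinearMap.sum_apply, LinearMap.add_apply, smul_eq_mul,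
      LinearMap.compl₁₂_apply, LinearMap.flip_apply, RingHom.id_apply, Finset.mul_sum]
    exact Finset.sum_congr rfl fun _ _ => by ring

theorem symmAverage_apply (σ : Representation K G V) (B : BilinForm K V) (v w : V) :
    σ.symmAverage B v w =
      (2 * Fintype.card G : K)⁻¹ * ∑ g : G, (B (σ g v) (σ g w) + B (σ g w) (σ g v)) := by
  simp [symmAverage]

theorem symmAverage_mem (σ : Representation K G V) (B : BilinForm K V) :
    σ.symmAverage B ∈ σ.invariantSymmForms := by
  refine ⟨fun v w => ?_, fun h v w => ?_⟩
  · simp only [symmAverage_apply, add_comm]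
  · simp only [symmAverage_apply, ← Module.End.mul_apply, ← map_mul]
    congr 1
    exact Fintype.sum_equiv (Equiv.mulRight h) _ _ fun g => rfl

theorem symmAverage_eq_self [CharZero K] (σ : Representation K G V)
    {B : BilinForm K V} (hB : B ∈ σ.invariantSymmForms) : σ.symmAverage B = B := by
  obtain ⟨hBs, hBi⟩ := hB
  ext v w
  simp only [symmAverage_apply, hBi, hBs w v, Finset.sum_const, Finset.card_univ, nsmul_eq_mul]
  field_simp
  ring

end Forms

theorem symmAverage_pos {K V G : Type*} [Field K] [LinearOrder K] [IsStrictOrderedRing K]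
    [AddCommGroup V] [Module K V] [Group G] [Fintype G] (σ : Representation K G V)
    {B : BilinForm K V} (hB : ∀ v ≠ 0, 0 < B v v) {v : V} (hv : v ≠ 0) :
    0 < σ.symmAverage B v v := by
  rw [symmAverage_apply]
  have hσv : ∀ g : G, σ g v ≠ 0 := fun g h => hv (by simpa using congrArg (σ g⁻¹) h)
  refine mul_pos (by positivity) (Finset.sum_pos (fun g _ => ?_) Finset.univ_nonempty)
  exact add_pos (hB _ (hσv g)) (hB _ (hσv g))

section InnerProduct

variable {G V : Type*} [Group G] [NormedAddCommGroup V] [InnerProductSpace ℝ V]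
  {σ : Representation ℝ G V} (hσ : ∀ (g : G) (v w : V), ⟪σ g v, σ g w⟫_ℝ = ⟪v, w⟫_ℝ)
include hσ

theorem innerₗ_mem_invariantSymmForms : innerₗ V ∈ σ.invariantSymmForms :=
  ⟨fun v w => real_inner_comm w v, hσ⟩

theorem exists_eq_smul_innerₗ_of_irreducible [FiniteDimensional ℝ V] [Nontrivial V]
    (hirr : ∀ U : Submodule ℝ V, (∀ g : G, ∀ x ∈ U, σ g x ∈ U) → U = ⊥ ∨ U = ⊤)
    {B : BilinForm ℝ V} (hB : B ∈ σ.invariantSymmForms) :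
    ∃ c : ℝ, B = c • innerₗ V := by
  have hnd : (innerₗ V).Nondegenerate :=
    ⟨fun v hv => inner_self_eq_zero.1 (hv v), fun v hv => inner_self_eq_zero.1 (hv v)⟩
  set T := B.symmCompOfNondegenerate (innerₗ V) hnd
  have hT : ∀ v w, ⟪T v, w⟫_ℝ = B v w := fun v w => B.symmCompOfNondegenerate_left_apply hnd w v
  have hT_symm : T.IsSymmetric := fun v w => by
    rw [hT, real_inner_comm, hT, hB.1]
  have hT_comm : ∀ (g : G) (v : V), T (σ g v) = σ g (T v) := fun g v =>
    ext_inner_right ℝ fun w => by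
      rw [hT, apply_map_left_eq_apply_map_inv_right hB, ← hT]
      exact (apply_map_left_eq_apply_map_inv_right (innerₗ_mem_invariantSymmForms hσ) g _ w).symm
  obtain ⟨μ, hμ⟩ : ∃ μ : ℝ, Module.End.HasEigenvalue T μ :=
    ⟨_, hT_symm.hasEigenvalue_iSup_of_finiteDimensional⟩
  have htop : Module.End.eigenspace T μ = ⊤ := by
    refine (hirr _ fun g v hv => ?_).resolve_left hμ
    rw [Module.End.mem_eigenspace_iff] at hv ⊢
    rw [hT_comm, hv, map_smul]
  refine ⟨μ, LinearMap.ext₂ fun v w => ?_⟩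
  have hv : T v = μ • v := Module.End.mem_eigenspace_iff.1 (htop ▸ Submodule.mem_top)
  rw [← hT, hv, real_inner_smul_left]
  rfl

theorem starProjection_map_eq_map_starProjection [FiniteDimensional ℝ V] {U : Submodule ℝ V}
    (hU : ∀ g : G, ∀ x ∈ U, σ g x ∈ U) (g : G) (v : V) :
    U.starProjection (σ g v) = σ g (U.starProjection v) := by
  refine Submodule.eq_starProjection_of_mem_of_inner_eq_zero
    (hU g _ (U.starProjection_apply_mem v)) fun w hw => ?_
  rw [← map_sub]
  exact (apply_map_left_eq_apply_map_inv_right (innerₗ_mem_invariantSymmForms hσ) g _ w).trans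
    (U.inner_left_of_mem_orthogonal (hU g⁻¹ w hw) (U.sub_starProjection_mem_orthogonal v))

theorem eq_bot_or_eq_top_of_forall_eq_smul_innerₗ [FiniteDimensional ℝ V]
    (h : ∀ B ∈ σ.invariantSymmForms, ∃ c : ℝ, B = c • innerₗ V)
    (U : Submodule ℝ V) (hU : ∀ g : G, ∀ x ∈ U, σ g x ∈ U) : U = ⊥ ∨ U = ⊤ := by
  set P := U.starProjection
  have hP_mem : (innerₗ V).compl₁₂ P.toLinearMap LinearMap.id ∈ σ.invariantSymmForms := by
    refine ⟨fun v w => ?_, fun g v w => ?_⟩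
    · simp only [LinearMap.compl₁₂_apply, ContinuousLinearMap.coe_coe, LinearMap.id_apply,
        innerₗ_apply_apply]
      rw [U.inner_starProjection_left_eq_right, real_inner_comm]
    · simp only [LinearMap.compl₁₂_apply, ContinuousLinearMap.coe_coe, LinearMap.id_apply,
        innerₗ_apply_apply]
      rw [starProjection_map_eq_map_starProjection hσ hU, hσ]
  obtain ⟨c, hc⟩ := h _ hP_mem
  have hP : ∀ v, P v = c • v := fun v => ext_inner_right ℝ fun w => by
    simpa [real_inner_smul_left] using LinearMap.congr_fun₂ hc v w
  refine (eq_or_ne U ⊥).imp_right fun hU_ne => ?_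
  obtain ⟨u, hu, hu0⟩ := U.ne_bot_iff.1 hU_ne
  have hc1 : c = 1 := smul_left_injective ℝ hu0 <| show c • u = (1 : ℝ) • u by
    rw [one_smul, ← hP]
    exact U.starProjection_eq_self_iff.2 hu
  refine Submodule.eq_top_iff'.2 fun v => ?_
  rw [← one_smul ℝ v, ← hc1, ← hP]
  exact U.starProjection_apply_mem v

theorem irreducible_iff_finrank_invariantSymmForms_eq_one_of_inner_map_map
    [FiniteDimensional ℝ V] :
    (Nontrivial V ∧ ∀ U : Submodule ℝ V, (∀ g : G, ∀ x ∈ U, σ g x ∈ U) → U = ⊥ ∨ U = ⊤) ↔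
      Module.finrank ℝ σ.invariantSymmForms = 1 := by
  have hinner := innerₗ_mem_invariantSymmForms hσ
  have hinner0 : Nontrivial V → innerₗ V ≠ 0 := fun _ h => by
    obtain ⟨v, hv⟩ := exists_ne (0 : V)
    exact hv (inner_self_eq_zero.1 (LinearMap.congr_fun₂ h v v))
  constructor
  · rintro ⟨hV, hirr⟩
    refine (finrank_invariantSymmForms_eq_one_iff_of_mem hinner (hinner0 hV)).2 fun B hB => ?_
    obtain ⟨c, hc⟩ := exists_eq_smul_innerₗ_of_irreducible hσ hirr hB
    exact ⟨c, hc.symm⟩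
  · intro h
    have hV : Nontrivial V := by
      by_contra hV
      have := not_nontrivial_iff_subsingleton.1 hV
      simp [Module.finrank_zero_of_subsingleton] at h
    refine ⟨hV, eq_bot_or_eq_top_of_forall_eq_smul_innerₗ hσ fun B hB => ?_⟩
    obtain ⟨c, hc⟩ := (finrank_invariantSymmForms_eq_one_iff_of_mem hinner (hinner0 hV)).1 h B hB
    exact ⟨c, hc.symm⟩

end InnerProduct

theorem irreducible_iff_finrank_invariantSymmForms_eq_one {G V : Type*} [Group G] [Fintype G]
    [AddCommGroup V] [Module ℝ V] [FiniteDimensional ℝ V] (σ : Representation ℝ G V) :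
    (Nontrivial V ∧ ∀ U : Submodule ℝ V, (∀ g : G, ∀ x ∈ U, σ g x ∈ U) → U = ⊥ ∨ U = ⊤) ↔
      Module.finrank ℝ σ.invariantSymmForms = 1 := by
  obtain ⟨B₀, hB₀⟩ := BilinForm.exists_forall_apply_self_pos V
  set B := σ.symmAverage B₀
  have hB : B ∈ σ.invariantSymmForms := σ.symmAverage_mem B₀
  have hB_pos : ∀ v ≠ 0, 0 < B v v := fun v hv => σ.symmAverage_pos hB₀ hv
  let core : InnerProductSpace.Core ℝ V :=
    { inner := fun v w => B v w
      conj_inner_symm := fun v w => hB.1 w v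
      re_inner_nonneg := fun v => by
        rcases eq_or_ne v 0 with rfl | hv
        · simp
        · exact (hB_pos v hv).le
      add_left := fun u v w => by simp
      smul_left := fun v w r => by simp
      definite := fun v hv => by_contra fun h => (hB_pos v h).ne' hv }
  let : NormedAddCommGroup V := core.toNormedAddCommGroup
  let : InnerProductSpace ℝ V := .ofCore core.toCore
  exact irreducible_iff_finrank_invariantSymmForms_eq_one_of_inner_map_map hB.2

section BaseChange

variable {K L W G : Type*} [Field K] [Field L] [Algebra K L] [AddCommGroup W] [Module K W]

variable (L) in
noncomputable def baseChange [Monoid G] (ρ : Representation K G W) :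
    Representation L G (L ⊗[K] W) :=
  (Module.End.baseChangeHom K L W).toMonoidHom.comp ρ

@[simp]
theorem baseChange_apply_tmul [Monoid G] (ρ : Representation K G W) (g : G) (a : L) (v : W) :
    ρ.baseChange L g (a ⊗ₜ v) = a ⊗ₜ ρ g v :=
  rfl

theorem baseChange_mem_invariantSymmForms [Monoid G] {ρ : Representation K G W}
    {B : BilinForm K W} (hB : B ∈ ρ.invariantSymmForms) :
    B.baseChange L ∈ (ρ.baseChange L).invariantSymmForms := by
  refine ⟨(BilinForm.IsSymm.baseChange L ⟨hB.1⟩).eq, fun g => ?_⟩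
  have : (B.baseChange L).compl₁₂ (ρ.baseChange L g) (ρ.baseChange L g) = B.baseChange L := by
    ext v w
    simp [hB.2]
  exact LinearMap.congr_fun₂ this

variable [Group G] [Fintype G]

theorem symmAverage_baseChange (ρ : Representation K G W) (B : BilinForm K W) :
    (ρ.baseChange L).symmAverage (B.baseChange L) = (ρ.symmAverage B).baseChange L := by
  ext v w
  simp [symmAverage_apply, ← Algebra.algebraMap_eq_smul_one, map_ofNat]

theorem invariantSymmForms_baseChange_le_span [CharZero K] [FiniteDimensional K W]
    (ρ : Representation K G W) :
    (ρ.baseChange L).invariantSymmForms ≤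
      Submodule.span L (BilinForm.baseChange L '' ρ.invariantSymmForms) := by
  have : CharZero L := charZero_of_injective_algebraMap (algebraMap K L).injective
  intro C hC
  rw [← symmAverage_eq_self _ hC]
  have h := Submodule.mem_map_of_mem (f := (ρ.baseChange L).symmAverage)
    (BilinForm.mem_span_range_baseChange C)
  rw [Submodule.map_span] at h
  refine Submodule.span_mono ?_ h
  rintro _ ⟨_, ⟨B, rfl⟩, rfl⟩
  exact ⟨ρ.symmAverage B, ρ.symmAverage_mem B, (symmAverage_baseChange ρ B).symm⟩

theorem finrank_invariantSymmForms_baseChange_eq_one_iff [CharZero K] [FiniteDimensional K W]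
    (ρ : Representation K G W) :
    Module.finrank L (ρ.baseChange L).invariantSymmForms = 1 ↔
      Module.finrank K ρ.invariantSymmForms = 1 := by
  have hspan := ρ.invariantSymmForms_baseChange_le_span (L := L)
  constructor
  · intro h
    obtain ⟨C, hC, hC0⟩ := Submodule.exists_mem_ne_zero_of_finrank_eq_one h
    obtain ⟨B₀, hB₀, hB₀0⟩ : ∃ B₀ ∈ ρ.invariantSymmForms, B₀ ≠ 0 := by
      by_contra! h0
      have hC_mem := hspan hC
      rw [Submodule.span_eq_bot.2 (Set.forall_mem_image.2 fun B hB => ?_), Submodule.mem_bot]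
        at hC_mem
      · exact hC0 hC_mem
      · simp [h0 B hB]
    refine (finrank_invariantSymmForms_eq_one_iff_of_mem hB₀ hB₀0).2 fun B hB => ?_
    obtain ⟨a, ha⟩ := (finrank_invariantSymmForms_eq_one_iff_of_mem
      (baseChange_mem_invariantSymmForms hB₀) (by simpa using hB₀0)).1 h _
      (baseChange_mem_invariantSymmForms hB)
    exact BilinForm.exists_smul_eq_of_smul_baseChange_eq_baseChange hB₀0 ha
  · intro h
    obtain ⟨B₀, hB₀, hB₀0⟩ := Submodule.exists_mem_ne_zero_of_finrank_eq_one h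
    have hB₀_span := (finrank_invariantSymmForms_eq_one_iff_of_mem hB₀ hB₀0).1 h
    refine (finrank_invariantSymmForms_eq_one_iff_of_mem (baseChange_mem_invariantSymmForms hB₀)
      (by simpa using hB₀0)).2 fun C hC => Submodule.mem_span_singleton.1 ?_
    refine Submodule.span_le.2 ?_ (hspan hC)
    rintro _ ⟨B, hB, rfl⟩
    obtain ⟨c, rfl⟩ := hB₀_span B hB
    rw [BilinForm.baseChange_smul]
    exact Submodule.smul_mem _ _ (Submodule.mem_span_singleton_self _)

end BaseChange

end Representation

theorem stmt11_general (G : Type) [Group G] [Fintype G]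
    (W : Type) [AddCommGroup W] [Module ℚ W] [FiniteDimensional ℚ W]
    (ρ : Representation ℚ G W)
    (S : Submodule ℚ (W →ₗ[ℚ] W →ₗ[ℚ] ℚ))
    (hS : (S : Set (W →ₗ[ℚ] W →ₗ[ℚ] ℚ)) =
      {B | (∀ v w : W, B v w = B w v) ∧ ∀ (g : G) (v w : W), B (ρ g v) (ρ g w) = B v w}) :
    ((Nontrivial (ℝ ⊗[ℚ] W) ∧
        ∀ U : Submodule ℝ (ℝ ⊗[ℚ] W),
          (∀ g : G, ∀ x ∈ U, LinearMap.baseChange ℝ (ρ g) x ∈ U) → U = ⊥ ∨ U = ⊤) ↔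
      Module.finrank ℚ S = 1) := by
  obtain rfl : S = ρ.invariantSymmForms := SetLike.coe_injective hS
  rw [← ρ.finrank_invariantSymmForms_baseChange_eq_one_iff (L := ℝ)]
  exact (ρ.baseChange ℝ).irreducible_iff_finrank_invariantSymmForms_eq_one

/-- Let `W` be a finite-dimensional irreducible `ℚ`-representation of a
finite group `G`.  Then the extension of scalars `ℝ ⊗_ℚ W` is irreducible as an
`ℝ`-representation of `G` if and only if the `ℚ`-vector space `S` of `G`-invariant
symmetric bilinear forms on `W` is `1`-dimensional. -/
theorem stmt11 (G : Type) [Group G] [Fintype G]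
    (W : Type) [AddCommGroup W] [Module ℚ W] [FiniteDimensional ℚ W]
    (ρ : Representation ℚ G W)
    (hirr : Nontrivial W ∧
      ∀ U : Submodule ℚ W, (∀ g : G, ∀ x ∈ U, ρ g x ∈ U) → U = ⊥ ∨ U = ⊤)
    (S : Submodule ℚ (W →ₗ[ℚ] W →ₗ[ℚ] ℚ))
    (hS : (S : Set (W →ₗ[ℚ] W →ₗ[ℚ] ℚ)) =
      {B | (∀ v w : W, B v w = B w v) ∧ ∀ (g : G) (v w : W), B (ρ g v) (ρ g w) = B v w}) :
    ((Nontrivial (ℝ ⊗[ℚ] W) ∧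
        ∀ U : Submodule ℝ (ℝ ⊗[ℚ] W),
          (∀ g : G, ∀ x ∈ U, LinearMap.baseChange ℝ (ρ g) x ∈ U) → U = ⊥ ∨ U = ⊤) ↔
      Module.finrank ℚ S = 1) :=
  stmt11_general G W ρ S hS
end
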